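/- Let (M,d) be a nonempty ultrametric space and let (A,B) be a proximinal pair of nonempty subsets of M. Then the following three statements are equivalent: (i) there is a point a′ ∈ A such that d(a′,b) = dist(A,B) for every b ∈ B; (ii) the inequality δ(B) ≤ dist(A,B) holds; (iii) the sets A₀ and B₀ are proximinal subsets of M, the equalities B₀ = B and dist(A₀,B₀) = dist(A,B) hold, and every pair (a,b) ∈ A₀ × B₀ satisfies d(a,b) = dist(A,B) (i.e., is a best proximity pair for both (A,B) and (A₀,B₀)). -/

import Mathlib

open Metric

variable {M : Type*} [MetricSpace M]

/-- A subset `A` of a metric space is *spherically complete* (as a subspace) if every nested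
decreasing sequence of closed balls of the subspace `A` has nonempty intersection. -/
def SphericallyCompleteSet (A : Set M) : Prop :=
  ∀ (c : ℕ → M) (r : ℕ → ℝ), (∀ n, c n ∈ A) → (∀ n, 0 ≤ r n) →
    (∀ n, A ∩ closedBall (c (n + 1)) (r (n + 1)) ⊆ A ∩ closedBall (c n) (r n)) →
    (A ∩ ⋂ n, closedBall (c n) (r n)).Nonempty

/-- A metric space is *spherically complete* if every nested decreasing sequence of closed
balls has nonempty intersection. -/
def SphericallyCompleteSpace (M : Type*) [MetricSpace M] : Prop :=
  ∀ (c : ℕ → M) (r : ℕ → ℝ), (∀ n, 0 ≤ r n) →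
    (∀ n, closedBall (c (n + 1)) (r (n + 1)) ⊆ closedBall (c n) (r n)) →
    (⋂ n, closedBall (c n) (r n)).Nonempty

/-- `dist(A, B) = inf {d(a,b) : a ∈ A, b ∈ B}`. -/
noncomputable def setDist (A B : Set M) : ℝ :=
  sInf {t : ℝ | ∃ a ∈ A, ∃ b ∈ B, dist a b = t}

/-- A subset `A` is *proximinal* if every point of `M` has a best approximation in `A`. -/
def IsProximinal (A : Set M) : Prop :=
  ∀ x : M, ∃ a ∈ A, dist x a = infDist x A

/-- `A₀ = {x ∈ A : d(x,y) = dist(A,B) for some y ∈ B}`. -/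
noncomputable def proxA (A B : Set M) : Set M :=
  {x ∈ A | ∃ y ∈ B, dist x y = setDist A B}

/-- `B₀ = {y ∈ B : d(x,y) = dist(A,B) for some x ∈ A}`. -/
noncomputable def proxB (A B : Set M) : Set M :=
  {y ∈ B | ∃ x ∈ A, dist x y = setDist A B}

/-- The closed ball `B(c,r)`, `r > 0`, is a *minimal `F`-invariant ball* if `F(B) ⊆ B`
and `d(y, F(y)) = r` for each `y ∈ B`. -/
def IsMinimalInvariantBall (F : M → M) (c : M) (r : ℝ) : Prop :=
  0 < r ∧ Set.MapsTo F (closedBall c r) (closedBall c r) ∧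
    ∀ y ∈ closedBall c r, dist y (F y) = r

/-!
Write `D = dist(A,B)`. In an ultrametric space every point of a ball is its centre, so if
`δ(B) ≤ D` then `B` lies in the ball of radius `D` about any `b₀ ∈ B`, and a point of `A` is at
distance `D` from one point of `B` iff it is at distance `≤ D` from `b₀`, iff it is at distance
exactly `D` from all of `B`. A best approximation of `b₀` in `A` is such a point, so
`A₀ = A ∩ closedBall b₀ D`, `B₀ = B`, and all of (iii) follows once one knows that the trace of a
proximinal set on a closed ball is proximinal. Conversely a point `a'` as in (i) puts `B` inside
`closedBall a' D`, which has diameter `≤ D`.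
-/

section SetDist

variable {A B : Set M}

lemma setDist_le_dist {a b : M} (ha : a ∈ A) (hb : b ∈ B) : setDist A B ≤ dist a b :=
  csInf_le ⟨0, by rintro t ⟨a, -, b, -, rfl⟩; exact dist_nonneg⟩ ⟨a, ha, b, hb, rfl⟩

lemma le_setDist {r : ℝ} (hA : A.Nonempty) (hB : B.Nonempty)
    (h : ∀ a ∈ A, ∀ b ∈ B, r ≤ dist a b) : r ≤ setDist A B := by
  obtain ⟨a, ha⟩ := hA
  obtain ⟨b, hb⟩ := hB
  refine le_csInf ⟨dist a b, a, ha, b, hb, rfl⟩ ?_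
  rintro t ⟨a, ha, b, hb, rfl⟩
  exact h a ha b hb

lemma setDist_eq_of_forall_dist_eq {r : ℝ} (hA : A.Nonempty) (hB : B.Nonempty)
    (h : ∀ a ∈ A, ∀ b ∈ B, dist a b = r) : setDist A B = r := by
  obtain ⟨a, ha⟩ := hA
  obtain ⟨b, hb⟩ := hB
  exact le_antisymm ((setDist_le_dist ha hb).trans (h a ha b hb).le)
    (le_setDist ⟨a, ha⟩ ⟨b, hb⟩ fun a ha b hb => (h a ha b hb).ge)

end SetDist

section Ultrametric

variable [IsUltrametricDist M]

lemma dist_le_of_dist_le_of_dist_le {x y z : M} {r : ℝ} (hxy : dist x y ≤ r)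
    (hyz : dist y z ≤ r) : dist x z ≤ r :=
  (dist_triangle_max x y z).trans (max_le hxy hyz)

/-- Points inside the ball see it as their own ball of radius `r`; points outside it are
equidistant from all of its points. -/
lemma IsProximinal.inter_closedBall {A : Set M} (hA : IsProximinal A) {c : M} {r : ℝ}
    (hne : (A ∩ closedBall c r).Nonempty) : IsProximinal (A ∩ closedBall c r) := by
  intro x
  obtain ⟨s, hs⟩ := hne
  by_cases hxc : dist x c ≤ r
  · have hball : closedBall c r = closedBall x r :=
      IsUltrametricDist.closedBall_eq_of_mem (mem_closedBall.2 hxc)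
    obtain ⟨a, haA, hxa⟩ := hA x
    have hxa_le : dist x a ≤ r := by
      rw [hxa]
      exact (infDist_le_dist_of_mem hs.1).trans (mem_closedBall'.1 (hball ▸ hs.2))
    have haS : a ∈ A ∩ closedBall c r := ⟨haA, hball ▸ mem_closedBall'.2 hxa_le⟩
    refine ⟨a, haS, le_antisymm ?_ (infDist_le_dist_of_mem haS)⟩
    rw [hxa]
    exact infDist_le_infDist_of_subset Set.inter_subset_left ⟨s, hs⟩
  · have hdist : ∀ y ∈ A ∩ closedBall c r, dist x y = dist x c := fun y hy => by
      have hcy : dist c y < dist x c := (mem_closedBall'.1 hy.2).trans_lt (not_le.1 hxc)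
      rw [IsUltrametricDist.dist_eq_max_of_dist_ne_dist x c y hcy.ne', max_eq_left hcy.le]
    refine ⟨s, hs, le_antisymm ?_ (infDist_le_dist_of_mem hs)⟩
    rw [le_infDist (Set.nonempty_of_mem hs)]
    intro y hy
    rw [hdist s hs, hdist y hy]

variable {A B : Set M}

lemma dist_le_setDist_of_forall_dist_eq {a' : M} (h : ∀ b ∈ B, dist a' b = setDist A B) :
    ∀ x ∈ B, ∀ y ∈ B, dist x y ≤ setDist A B := fun x hx y hy =>
  dist_le_of_dist_le_of_dist_le ((dist_comm x a').trans_le (h x hx).le) (h y hy).le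

section SmallDiameter

variable (hdiam : ∀ x ∈ B, ∀ y ∈ B, dist x y ≤ setDist A B)
include hdiam

lemma infDist_le_setDist (hA : A.Nonempty) {b : M} (hb : b ∈ B) :
    infDist b A ≤ setDist A B :=
  le_setDist hA ⟨b, hb⟩ fun a ha b' hb' => (infDist_le_dist_of_mem ha).trans <|
    dist_le_of_dist_le_of_dist_le ((hdiam b hb b' hb').trans (setDist_le_dist ha hb'))
      (dist_comm b' a).le

lemma IsProximinal.exists_dist_eq_setDist (hAprox : IsProximinal A) (hA : A.Nonempty)
    {b : M} (hb : b ∈ B) : ∃ a ∈ A, dist a b = setDist A B := by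
  obtain ⟨a, ha, hba⟩ := hAprox b
  refine ⟨a, ha, le_antisymm ?_ (setDist_le_dist ha hb)⟩
  rw [dist_comm, hba]
  exact infDist_le_setDist hdiam hA hb

lemma mem_proxA_iff {b₀ : M} (hb₀ : b₀ ∈ B) {a : M} :
    a ∈ proxA A B ↔ a ∈ A ∧ dist a b₀ ≤ setDist A B := by
  refine ⟨fun ⟨ha, b, hb, hab⟩ => ⟨ha, ?_⟩, fun ⟨ha, hab₀⟩ => ?_⟩
  · exact dist_le_of_dist_le_of_dist_le hab.le (hdiam b hb b₀ hb₀)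
  · exact ⟨ha, b₀, hb₀, le_antisymm hab₀ (setDist_le_dist ha hb₀)⟩

lemma dist_eq_setDist_of_mem_proxA {a b : M} (ha : a ∈ proxA A B) (hb : b ∈ B) :
    dist a b = setDist A B :=
  le_antisymm ((mem_proxA_iff hdiam hb).1 ha).2 (setDist_le_dist ha.1 hb)

lemma proxA_eq_inter_closedBall {b₀ : M} (hb₀ : b₀ ∈ B) :
    proxA A B = A ∩ closedBall b₀ (setDist A B) :=
  Set.ext fun _ => mem_proxA_iff hdiam hb₀

lemma proxB_eq_self (hAprox : IsProximinal A) (hA : A.Nonempty) : proxB A B = B :=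
  Set.Subset.antisymm (fun _ hb => hb.1) fun _ hb =>
    ⟨hb, hAprox.exists_dist_eq_setDist hdiam hA hb⟩

lemma exists_forall_dist_eq_setDist (hAprox : IsProximinal A) (hA : A.Nonempty)
    (hB : B.Nonempty) : ∃ a' ∈ A, ∀ b ∈ B, dist a' b = setDist A B := by
  obtain ⟨b₀, hb₀⟩ := hB
  obtain ⟨a', ha', hab₀⟩ := hAprox.exists_dist_eq_setDist hdiam hA hb₀
  exact ⟨a', ha', fun b hb =>
    dist_eq_setDist_of_mem_proxA hdiam ⟨ha', b₀, hb₀, hab₀⟩ hb⟩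

end SmallDiameter

end Ultrametric

theorem bestProximity_tfae_general {M : Type*} [MetricSpace M] [IsUltrametricDist M]
    (A B : Set M) (hA : A.Nonempty) (hB : B.Nonempty)
    (hAprox : IsProximinal A) (hBprox : IsProximinal B) :
    ((∃ a' ∈ A, ∀ b ∈ B, dist a' b = setDist A B) ↔
        (∀ x ∈ B, ∀ y ∈ B, dist x y ≤ setDist A B)) ∧
      ((∀ x ∈ B, ∀ y ∈ B, dist x y ≤ setDist A B) ↔
        (IsProximinal (proxA A B) ∧ IsProximinal (proxB A B) ∧ proxB A B = B ∧
          setDist (proxA A B) (proxB A B) = setDist A B ∧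
          ∀ a ∈ proxA A B, ∀ b ∈ proxB A B, dist a b = setDist A B)) := by
  have ii_of_i : (∃ a' ∈ A, ∀ b ∈ B, dist a' b = setDist A B) →
      ∀ x ∈ B, ∀ y ∈ B, dist x y ≤ setDist A B :=
    fun ⟨_, _, h⟩ => dist_le_setDist_of_forall_dist_eq h
  refine ⟨⟨ii_of_i, fun hdiam => exists_forall_dist_eq_setDist hdiam hAprox hA hB⟩,
    fun hdiam => ?_, fun ⟨_, _, hB₀, _, hall⟩ => ii_of_i ?_⟩
  · have hB₀ := proxB_eq_self hdiam hAprox hA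
    obtain ⟨b₀, hb₀⟩ := hB
    have hA₀ := proxA_eq_inter_closedBall hdiam hb₀
    obtain ⟨a₀, ha₀, hab₀⟩ := hAprox.exists_dist_eq_setDist hdiam hA hb₀
    have hall : ∀ a ∈ proxA A B, ∀ b ∈ proxB A B, dist a b = setDist A B :=
      fun a ha b hb => dist_eq_setDist_of_mem_proxA hdiam ha hb.1
    have ha₀ : a₀ ∈ proxA A B := ⟨ha₀, b₀, hb₀, hab₀⟩
    refine ⟨?_, hB₀.symm ▸ hBprox, hB₀,
      setDist_eq_of_forall_dist_eq ⟨a₀, ha₀⟩ (hB₀.symm ▸ ⟨b₀, hb₀⟩) hall, hall⟩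
    rw [hA₀] at ha₀ ⊢
    exact hAprox.inter_closedBall ⟨a₀, ha₀⟩
  · obtain ⟨b₀, hb₀⟩ := hB
    obtain ⟨-, a, ha, hab₀⟩ := hB₀.symm ▸ hb₀
    exact ⟨a, ha, fun b hb => hall a ⟨ha, b₀, hb₀, hab₀⟩ b (hB₀.symm ▸ hb)⟩

/-- **Theorem 2.5.** For a proximinal pair `(A,B)` of nonempty subsets of a nonempty
ultrametric space, the following are equivalent:
(i) some `a' ∈ A` satisfies `d(a', b) = dist(A,B)` for every `b ∈ B`;
(ii) `δ(B) ≤ dist(A,B)`;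
(iii) `A₀` and `B₀` are proximinal, `B₀ = B`, `dist(A₀,B₀) = dist(A,B)`, and every pair
`(a,b) ∈ A₀ × B₀` is a best proximity pair for `(A,B)` (and hence for `(A₀,B₀)`). -/
theorem bestProximity_tfae {M : Type*} [MetricSpace M] [IsUltrametricDist M]
    [Nonempty M] (A B : Set M) (hA : A.Nonempty) (hB : B.Nonempty)
    (hAprox : IsProximinal A) (hBprox : IsProximinal B) :
    ((∃ a' ∈ A, ∀ b ∈ B, dist a' b = setDist A B) ↔
        (∀ x ∈ B, ∀ y ∈ B, dist x y ≤ setDist A B)) ∧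
      ((∀ x ∈ B, ∀ y ∈ B, dist x y ≤ setDist A B) ↔
        (IsProximinal (proxA A B) ∧ IsProximinal (proxB A B) ∧ proxB A B = B ∧
          setDist (proxA A B) (proxB A B) = setDist A B ∧
          ∀ a ∈ proxA A B, ∀ b ∈ proxB A B, dist a b = setDist A B)) :=
  bestProximity_tfae_general A B hA hB hAprox hBprox
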